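/- arXiv:2006.00643 — 4 statements merged into one kernel-verified Lean document; each statement's English description precedes it below -/
import Mathlib

section
/- Let μ, σ̃ : X → ℝ be functions on a nonempty finite set X with σ̃ not constant, i.e., there exist x₁, x₂ ∈ X with σ̃(x₁) ≠ σ̃(x₂). Let Z be a standard normal random variable. Then E[max over x ∈ X of (μ(x) + σ̃(x)·Z)] > max over x ∈ X of μ(x). -/
/-!
Let `x₀` maximise `μ` and pick `y` with `σ̃ y ≠ σ̃ x₀`. The maximum over `X` dominates
`max (μ x₀ + σ̃ x₀ Z) (μ y + σ̃ y Z) = μ x₀ + σ̃ x₀ Z + (μ y - μ x₀ + (σ̃ y - σ̃ x₀) Z)⁺`.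
As `Z` is centred, the right-hand side has expectation `μ x₀` plus that of the positive part,
which is positive: the positive part is nonzero on the preimage of a nonempty open half-line,
and the Gaussian charges every nonempty open set.
-/

open MeasureTheory Measure ProbabilityTheory NNReal

section

variable {Ω X : Type*} [MeasurableSpace Ω] {P : Measure Ω}

lemma integrable_ciSup_of_fintype [Fintype X] [Nonempty X] {f : X → Ω → ℝ}
    (hf : ∀ x, Integrable (f x) P) : Integrable (fun ω ↦ ⨆ x, f x ω) P := by
  have hsup : (fun ω ↦ ⨆ x, f x ω) = Finset.univ.sup' Finset.univ_nonempty f := by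
    ext ω
    rw [Finset.sup'_apply, Finset.sup'_univ_eq_ciSup]
  rw [hsup]
  exact Finset.sup'_induction (p := (Integrable · P)) _ _ (fun _ hg _ hh ↦ hg.sup hh)
    fun x _ ↦ hf x

lemma lt_integral_max_affine [IsProbabilityMeasure P] {Z : Ω → ℝ} (hZ : Integrable Z P)
    (hmean : ∫ ω, Z ω ∂P = 0) {a b c d : ℝ}
    (hpos : 0 < P {ω | a + b * Z ω < c + d * Z ω}) :
    a < ∫ ω, max (a + b * Z ω) (c + d * Z ω) ∂P := by
  have hab : Integrable (fun ω ↦ a + b * Z ω) P := (integrable_const a).add (hZ.const_mul b)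
  have hcd : Integrable (fun ω ↦ c + d * Z ω) P := (integrable_const c).add (hZ.const_mul d)
  set gain : Ω → ℝ := fun ω ↦ max 0 (c + d * Z ω - (a + b * Z ω))
  have hgain_int : Integrable gain P := (integrable_zero _ _ _).sup (hcd.sub hab)
  have hgain_pos : 0 < ∫ ω, gain ω ∂P := by
    refine (integral_pos_iff_support_of_nonneg (fun ω ↦ le_max_left _ _) hgain_int).mpr ?_
    refine hpos.trans_le (measure_mono fun ω hω ↦ ?_)
    exact (lt_max_of_lt_right (sub_pos.mpr hω)).ne'
  have hsplit : ∀ ω, max (a + b * Z ω) (c + d * Z ω) = a + b * Z ω + gain ω := fun ω ↦ by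
    rw [← max_add_add_left, add_zero, add_sub_cancel]
  simp_rw [hsplit]
  rw [integral_add hab hgain_int, integral_add (integrable_const a) (hZ.const_mul b),
    integral_const_mul, hmean]
  simpa using hgain_pos

end

lemma isOpenPosMeasure_gaussianReal (μ : ℝ) {v : ℝ≥0} (hv : v ≠ 0) :
    IsOpenPosMeasure (gaussianReal μ v) :=
  (gaussianReal_absolutelyContinuous' μ hv).isOpenPosMeasure

lemma ProbabilityTheory.HasLaw.measure_preimage_pos_of_gaussianReal {Ω : Type*}
    [MeasurableSpace Ω] {P : Measure Ω} {Z : Ω → ℝ} {μ : ℝ} {v : ℝ≥0} (hv : v ≠ 0)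
    (hZ : HasLaw Z (gaussianReal μ v) P) {s : Set ℝ} (hs : IsOpen s) (hne : s.Nonempty) :
    0 < P (Z ⁻¹' s) := by
  have := isOpenPosMeasure_gaussianReal μ hv
  rw [← map_apply_of_aemeasurable hZ.aemeasurable hs.measurableSet, hZ.map_eq]
  exact hs.measure_pos _ hne

lemma isOpen_setOf_affine_lt_affine (a b c d : ℝ) : IsOpen {z : ℝ | a + b * z < c + d * z} :=
  isOpen_lt (by fun_prop) (by fun_prop)

lemma nonempty_setOf_affine_lt_affine (a c : ℝ) {b d : ℝ} (hbd : b ≠ d) :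
    {z : ℝ | a + b * z < c + d * z}.Nonempty := by
  refine ⟨(a - c + 1) / (d - b), ?_⟩
  have : (d - b) * ((a - c + 1) / (d - b)) = a - c + 1 :=
    mul_div_cancel₀ _ (sub_ne_zero.mpr hbd.symm)
  show a + b * _ < c + d * _
  linarith

theorem stmt2_general {Ω : Type*} [MeasureSpace Ω]
    {X : Type*} [Fintype X]
    (μf σt : X → ℝ) (x₁ x₂ : X) (hne : σt x₁ ≠ σt x₂)
    (Z : Ω → ℝ)
    (hZ : Measure.map Z volume = gaussianReal 0 1) :
    (⨆ x, μf x) < ∫ ω, ⨆ x, (μf x + σt x * Z ω) := by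
  have : Nonempty X := ⟨x₁⟩
  have hZlaw : HasLaw Z (gaussianReal 0 1) :=
    ⟨.of_map_ne_zero (hZ ▸ IsProbabilityMeasure.ne_zero _), hZ⟩
  have := hZlaw.isProbabilityMeasure
  have hZint : Integrable Z :=
    (integrable_map_measure aestronglyMeasurable_id hZlaw.aemeasurable).mp
      (hZ ▸ memLp_one_iff_integrable.mp (memLp_id_gaussianReal 1))
  have hmean : ∫ ω, Z ω = 0 := hZlaw.integral_eq.trans integral_id_gaussianReal
  obtain ⟨x₀, hx₀⟩ := Finite.exists_max μf
  obtain ⟨y, hy⟩ : ∃ y, σt x₀ ≠ σt y := by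
    by_contra! h
    exact hne ((h x₁).symm.trans (h x₂))
  have hbdd : ∀ ω, BddAbove (Set.range fun x ↦ μf x + σt x * Z ω) :=
    fun ω ↦ (Set.finite_range _).bddAbove
  have hint : ∀ x, Integrable (fun ω ↦ μf x + σt x * Z ω) :=
    fun x ↦ (integrable_const _).add (hZint.const_mul _)
  calc (⨆ x, μf x) = μf x₀ :=
        le_antisymm (ciSup_le hx₀) (le_ciSup (Set.finite_range μf).bddAbove x₀)
    _ < ∫ ω, max (μf x₀ + σt x₀ * Z ω) (μf y + σt y * Z ω) :=
      lt_integral_max_affine hZint hmean <| hZlaw.measure_preimage_pos_of_gaussianReal one_ne_zero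
        (isOpen_setOf_affine_lt_affine _ _ _ _) (nonempty_setOf_affine_lt_affine _ _ hy)
    _ ≤ ∫ ω, ⨆ x, (μf x + σt x * Z ω) :=
      integral_mono ((hint x₀).sup (hint y)) (integrable_ciSup_of_fintype hint)
        fun ω ↦ max_le (le_ciSup (hbdd ω) x₀) (le_ciSup (hbdd ω) y)

/-- Strict positivity of the Knowledge-Gradient Value of Information when the
update coefficients `σ̃` are not constant. -/
theorem stmt2 {Ω : Type*} [MeasureSpace Ω] [IsProbabilityMeasure (volume : Measure Ω)]
    {X : Type*} [Fintype X] [Nonempty X]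
    (μf σt : X → ℝ) (x₁ x₂ : X) (hne : σt x₁ ≠ σt x₂)
    (Z : Ω → ℝ) (hZm : Measurable Z)
    (hZ : Measure.map Z volume = gaussianReal 0 1) :
    (⨆ x, μf x) < ∫ ω, ⨆ x, (μf x + σt x * Z ω) :=
  stmt2_general μf σt x₁ x₂ hne Z hZ
end

section
/- Let W be a square-integrable random variable on a probability space with filtration (ℱₙ), and set μⁿ = E[W | ℱₙ] and vⁿ = E[(W − μⁿ)² | ℱₙ] (the conditional variance). If E[vⁿ] → 0 as n → ∞, then E[(W·W') | ℱₙ] − μⁿ · E[W' | ℱₙ] → 0 in L¹ for any bounded ℱ_∞-measurable W' and, in particular, E[W² | ℱₙ] − (μⁿ)² → 0 in L¹. -/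
/-!
Write `μₙ = E[W | ℱₙ]` and `vₙ` for the conditional variance. Pulling out the `ℱₙ`-measurable
factor `μₙ` gives `E[W W' | ℱₙ] - μₙ E[W' | ℱₙ] = E[(W - μₙ) W' | ℱₙ]`, whose L¹ norm is at most
`C E|W - μₙ| ≤ C √(E (W - μₙ)²) = C √(E vₙ)` when `|W'| ≤ C`. For `W' = W` the difference is
`vₙ` itself, which is nonnegative, so its L¹ norm is exactly `E vₙ`.
-/

open MeasureTheory Filter ProbabilityTheory

section

variable {Ω : Type*} {m m0 : MeasurableSpace Ω} {μ : Measure Ω}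

lemma sq_integral_abs_le_integral_sq [IsProbabilityMeasure μ] {f : Ω → ℝ} (hf : MemLp f 2 μ) :
    (∫ ω, |f ω| ∂μ) ^ 2 ≤ ∫ ω, f ω ^ 2 ∂μ := by
  have h := variance_nonneg |f| μ
  rw [variance_eq_sub hf.abs] at h
  simpa only [Pi.pow_apply, Pi.abs_apply, sq_abs, sub_nonneg] using h

lemma condExp_mul_sub_mul_condExp_ae_eq {X Y : Ω → ℝ} {C : ℝ} [IsFiniteMeasure μ]
    (hX : Integrable X μ) (hY : AEStronglyMeasurable Y μ) (hC : ∀ᵐ ω ∂μ, |Y ω| ≤ C) :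
    μ[X * Y | m] - μ[X | m] * μ[Y | m] =ᵐ[μ] μ[(X - μ[X | m]) * Y | m] := by
  have hXY : Integrable (X * Y) μ := hX.mul_bdd hY hC
  have hcXY : Integrable (μ[X | m] * Y) μ := integrable_condExp.mul_bdd hY hC
  filter_upwards [condExp_sub hXY hcXY m,
    condExp_mul_of_stronglyMeasurable_left stronglyMeasurable_condExp hcXY
      (Integrable.of_bound hY C hC)] with ω hsub hmul
  rw [Pi.sub_apply, sub_mul, hsub, Pi.sub_apply, hmul]

lemma integral_abs_condExp_mul_sub_mul_condExp_le {X Y : Ω → ℝ} {C : ℝ} [IsFiniteMeasure μ]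
    (hX : Integrable X μ) (hY : AEStronglyMeasurable Y μ) (hC : ∀ᵐ ω ∂μ, |Y ω| ≤ C) :
    ∫ ω, |(μ[X * Y | m]) ω - (μ[X | m]) ω * (μ[Y | m]) ω| ∂μ
      ≤ C * ∫ ω, |X ω - (μ[X | m]) ω| ∂μ := by
  have hres : Integrable (X - μ[X | m]) μ := hX.sub integrable_condExp
  calc ∫ ω, |(μ[X * Y | m]) ω - (μ[X | m]) ω * (μ[Y | m]) ω| ∂μ
      = ∫ ω, |(μ[(X - μ[X | m]) * Y | m]) ω| ∂μ :=
        integral_congr_ae <| by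
          filter_upwards [condExp_mul_sub_mul_condExp_ae_eq hX hY hC] with ω h
          rw [← h, Pi.sub_apply, Pi.mul_apply]
    _ ≤ ∫ ω, |((X - μ[X | m]) * Y) ω| ∂μ := integral_abs_condExp_le _
    _ ≤ ∫ ω, C * |X ω - (μ[X | m]) ω| ∂μ := by
        refine integral_mono_ae (hres.mul_bdd hY hC).abs (hres.abs.const_mul C) ?_
        filter_upwards [hC] with ω hω
        rw [Pi.mul_apply, abs_mul, mul_comm]
        exact mul_le_mul_of_nonneg_right hω (abs_nonneg _)
    _ = C * ∫ ω, |X ω - (μ[X | m]) ω| ∂μ := integral_const_mul _ _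

lemma integral_abs_condExp_mul_sub_mul_condExp_le_sqrt_integral_condVar
    [IsProbabilityMeasure μ] (hm : m ≤ m0) {X Y : Ω → ℝ} {C : ℝ} (hX : MemLp X 2 μ)
    (hY : AEStronglyMeasurable Y μ) (hC : ∀ᵐ ω ∂μ, |Y ω| ≤ C) :
    ∫ ω, |(μ[X * Y | m]) ω - (μ[X | m]) ω * (μ[Y | m]) ω| ∂μ
      ≤ C * √(∫ ω, Var[X; μ | m] ω ∂μ) := by
  obtain ⟨ω, hω⟩ := hC.exists
  have hres : MemLp (X - μ[X | m]) 2 μ := hX.sub (hX.condExp one_le_two)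
  refine (integral_abs_condExp_mul_sub_mul_condExp_le (hX.integrable one_le_two) hY hC).trans ?_
  gcongr
  · exact (abs_nonneg _).trans hω
  rw [condVar, integral_condExp hm]
  exact (le_abs_self _).trans (Real.abs_le_sqrt (sq_integral_abs_le_integral_sq hres))

lemma integral_abs_condExp_sq_sub_sq_condExp [IsFiniteMeasure μ] (hm : m ≤ m0) {X : Ω → ℝ}
    (hX : MemLp X 2 μ) :
    ∫ ω, |(μ[X ^ 2 | m]) ω - (μ[X | m]) ω ^ 2| ∂μ = ∫ ω, Var[X; μ | m] ω ∂μ := by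
  refine integral_congr_ae ?_
  filter_upwards [condVar_ae_eq_condExp_sq_sub_sq_condExp hm hX,
    condExp_nonneg (m := m) (Eventually.of_forall fun ω => sq_nonneg ((X - μ[X | m]) ω))]
    with ω hvar hnonneg
  rw [← Pi.pow_apply, ← Pi.sub_apply, ← hvar]
  exact abs_of_nonneg hnonneg

end

/-- If the posterior (conditional) variance of `W` vanishes in expectation,
then conditional second moments factorize in the limit:
`E[W W' | ℱₙ] − E[W|ℱₙ]·E[W'|ℱₙ] → 0` in L¹ for bounded `ℱ_∞`-measurable `W'`,
and in particular `E[W²|ℱₙ] − (E[W|ℱₙ])² → 0` in L¹. -/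
theorem stmt5 {Ω : Type*} {m0 : MeasurableSpace Ω} {μ : Measure Ω} [IsProbabilityMeasure μ]
    (ℱ : Filtration ℕ m0) (W : Ω → ℝ) (hW : MemLp W 2 μ)
    (hv : Tendsto
      (fun n => ∫ ω, (μ[(fun ω' => (W ω' - (μ[W | ℱ n]) ω') ^ 2) | ℱ n]) ω ∂μ)
      atTop (nhds 0)) :
    (∀ W' : Ω → ℝ, Measurable[⨆ n, ℱ n] W' → (∃ C, ∀ ω, |W' ω| ≤ C) →
      Tendsto
        (fun n => ∫ ω, |(μ[(fun ω' => W ω' * W' ω') | ℱ n]) ω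
          - (μ[W | ℱ n]) ω * (μ[W' | ℱ n]) ω| ∂μ) atTop (nhds 0)) ∧
    Tendsto
      (fun n => ∫ ω, |(μ[(fun ω' => (W ω') ^ 2) | ℱ n]) ω - ((μ[W | ℱ n]) ω) ^ 2| ∂μ)
      atTop (nhds 0) := by
  have hvar : Tendsto (fun n => ∫ ω, Var[W; μ | ℱ n] ω ∂μ) atTop (nhds 0) := hv
  refine ⟨fun W' hW' ⟨C, hC⟩ => ?_, ?_⟩
  · have hW'm : AEStronglyMeasurable W' μ :=
      (hW'.mono (iSup_le ℱ.le) le_rfl).aestronglyMeasurable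
    have hbound : Tendsto (fun n => C * √(∫ ω, Var[W; μ | ℱ n] ω ∂μ)) atTop (nhds 0) := by
      simpa using hvar.sqrt.const_mul C
    exact squeeze_zero (fun n => integral_nonneg fun ω => abs_nonneg _)
      (fun n => integral_abs_condExp_mul_sub_mul_condExp_le_sqrt_integral_condVar (ℱ.le n) hW
        hW'm (Eventually.of_forall hC)) hbound
  · exact hvar.congr fun n => (integral_abs_condExp_sq_sub_sq_condExp (ℱ.le n) hW).symm
end

section
/- In the setting of the previous statement, suppose additionally that the expected improvement is zero: E_{r∼Q}[ max_{x∈X} ∫ μ(x,a) dν_r(a) ] = max_{x∈X} ∫ μ(x,a) dν(a), and let x₀ attain the max on the right. Then for Q-almost every r, max_{x∈X} ∫ μ(x,a) dν_r(a) = ∫ μ(x₀,a) dν_r(a); i.e., the current recommended solution x₀ remains optimal under the updated posterior for almost every possible new observation. -/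
open MeasureTheory Filter

private lemma fin_ciSup_eq_sup' {X : Type*} [Fintype X] [Nonempty X] (f : X → ℝ) :
    (⨆ x, f x) = Finset.univ.sup' Finset.univ_nonempty f := by
  apply le_antisymm
  · exact ciSup_le fun x => Finset.le_sup' f (Finset.mem_univ x)
  · exact Finset.sup'_le _ _ fun x _ =>
      le_ciSup (Set.Finite.bddAbove (Set.finite_range f)) x

/-- If the Value of Information of querying the data source is zero, then for
almost every possible new observation the current recommended solution `x₀`
remains optimal under the updated posterior. -/
theorem stmt10 {A R : Type*} [MeasurableSpace A] [MeasurableSpace R]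
    (ν : Measure A) [IsProbabilityMeasure ν]
    (Q : Measure R) [IsProbabilityMeasure Q]
    (νr : R → Measure A) [∀ r, IsProbabilityMeasure (νr r)]
    (hkermeas : ∀ B : Set A, MeasurableSet B → Measurable fun r => ((νr r) B).toReal)
    (htower : ∀ B : Set A, MeasurableSet B →
      ∫ r, ((νr r) B).toReal ∂Q = (ν B).toReal)
    {X : Type*} [Fintype X] [Nonempty X]
    (μf : X → A → ℝ) (hmeas : ∀ x, Measurable (μf x))
    (C : ℝ) (hbd : ∀ x a, |μf x a| ≤ C)
    (x₀ : X) (hx₀ : (∫ a, μf x₀ a ∂ν) = ⨆ x, ∫ a, μf x a ∂ν)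
    (hzero : ∫ r, ⨆ x, ∫ a, μf x a ∂(νr r) ∂Q = ⨆ x, ∫ a, μf x a ∂ν) :
    ∀ᵐ r ∂Q, (⨆ x, ∫ a, μf x a ∂(νr r)) = ∫ a, μf x₀ a ∂(νr r) := by
  -- the kernel
  have hκmeas : Measurable νr := by
    apply Measure.measurable_of_measurable_coe
    intro B hB
    have : (fun r => νr r B) = fun r => ENNReal.ofReal ((νr r B).toReal) := by
      funext r
      rw [ENNReal.ofReal_toReal (measure_ne_top _ _)]
    rw [this]
    exact ENNReal.measurable_ofReal.comp (hkermeas B hB)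
  set κ : ProbabilityTheory.Kernel R A := ⟨νr, hκmeas⟩ with hκ
  have hκapp : ∀ r, κ r = νr r := fun r => rfl
  haveI : ProbabilityTheory.IsMarkovKernel κ := ⟨fun r => by rw [hκapp]; infer_instance⟩
  -- the second marginal of Q ⊗ₘ κ is ν
  have hsnd : (Q.compProd κ).snd = ν := by
    ext B hB
    rw [Measure.snd_apply hB, Measure.compProd_apply (measurable_snd hB)]
    have hpre : ∀ r : R, Prod.mk r ⁻¹' (Prod.snd ⁻¹' B) = B := fun r => rfl
    simp_rw [hpre, hκapp]
    have h1 := htower B hB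
    have h2 := integral_toReal (f := fun r => (νr r) B) (μ := Q)
      ((Measure.measurable_coe hB).comp hκmeas).aemeasurable
      (Filter.Eventually.of_forall fun r => measure_lt_top _ _)
    rw [h2] at h1
    have hfin : ∫⁻ r, νr r B ∂Q ≠ ⊤ := by
      refine ne_top_of_le_ne_top ?_ (lintegral_mono fun r => prob_le_one)
      simp
    exact (ENNReal.toReal_eq_toReal_iff' hfin (measure_ne_top _ _)).mp h1
  -- integrability over the product
  have hint : ∀ x : X, Integrable (fun z : R × A => μf x z.2) (Q.compProd κ) := by
    intro x
    refine ⟨((hmeas x).comp measurable_snd).aestronglyMeasurable, ?_⟩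
    exact HasFiniteIntegral.of_bounded (C := C)
      (Filter.Eventually.of_forall fun z => by simpa using hbd x z.2)
  -- tower property for integrals
  have key : ∀ x : X, ∫ r, ∫ a, μf x a ∂(νr r) ∂Q = ∫ a, μf x a ∂ν := by
    intro x
    rw [← hsnd, Measure.snd,
      integral_map measurable_snd.aemeasurable (hmeas x).aestronglyMeasurable,
      Measure.integral_compProd (hint x)]
    rfl
  -- measurability and bounds for the inner integrals
  set F : X → R → ℝ := fun x r => ∫ a, μf x a ∂(νr r) with hF
  have hFsm : ∀ x, StronglyMeasurable (F x) := by
    intro x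
    have : StronglyMeasurable fun r => ∫ a, (fun (_ : R) (a : A) => μf x a) r a ∂(κ r) :=
      StronglyMeasurable.integral_kernel_prod_right
        (((hmeas x).comp measurable_snd).stronglyMeasurable)
    simpa [hκapp] using this
  have hFbd : ∀ x r, |F x r| ≤ C := by
    intro x r
    calc |F x r| = ‖∫ a, μf x a ∂(νr r)‖ := rfl
    _ ≤ C * ((νr r) Set.univ).toReal :=
        norm_integral_le_of_norm_le_const (Filter.Eventually.of_forall fun a => by
          simpa using hbd x a)
    _ = C := by simp
  have hFint : ∀ x, Integrable (F x) Q := by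
    intro x
    exact ⟨(hFsm x).aestronglyMeasurable,
      HasFiniteIntegral.of_bounded (Filter.Eventually.of_forall fun r => by
        simpa using hFbd x r)⟩
  -- the sup as a finite sup'
  set G : R → ℝ := fun r => ⨆ x, F x r with hG
  have hGsup' : G = fun r => Finset.univ.sup' Finset.univ_nonempty (fun x => F x r) := by
    funext r; exact fin_ciSup_eq_sup' _
  have hGsm : StronglyMeasurable G := by
    rw [hGsup']
    have h := (Finset.measurable_sup' (s := Finset.univ) Finset.univ_nonempty
      (fun x _ => (hFsm x).measurable)).stronglyMeasurable
    convert h using 1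
    funext r
    exact (Finset.sup'_apply _ _ _).symm
  have hGbd : ∀ r, |G r| ≤ C := by
    intro r
    rw [hGsup', abs_le]
    constructor
    · exact le_trans (abs_le.mp (hFbd (Classical.arbitrary X) r)).1
        (Finset.le_sup' (fun x => F x r) (Finset.mem_univ (Classical.arbitrary X)))
    · exact Finset.sup'_le _ _ fun x _ => (le_abs_self _).trans (hFbd x r)
  have hGint : Integrable G Q :=
    ⟨hGsm.aestronglyMeasurable,
      HasFiniteIntegral.of_bounded (Filter.Eventually.of_forall fun r => by
        simpa using hGbd r)⟩
  -- pointwise nonneg of G - F x₀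
  have hle : ∀ r, F x₀ r ≤ G r := fun r =>
    le_ciSup (Set.Finite.bddAbove (Set.finite_range fun x => F x r)) x₀
  -- the integral of G - F x₀ is zero
  have hzero' : ∫ r, (G r - F x₀ r) ∂Q = 0 := by
    rw [integral_sub hGint (hFint x₀)]
    have h1 : ∫ r, G r ∂Q = ⨆ x, ∫ a, μf x a ∂ν := hzero
    have h2 : ∫ r, F x₀ r ∂Q = ⨆ x, ∫ a, μf x a ∂ν := by rw [key x₀, hx₀]
    rw [h1, h2, sub_self]
  have hae : (fun r => G r - F x₀ r) =ᵐ[Q] 0 := by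
    rw [← integral_eq_zero_iff_of_nonneg (fun r => sub_nonneg.mpr (hle r))
      (hGint.sub (hFint x₀))]
    exact hzero'
  filter_upwards [hae] with r hr
  have : G r - F x₀ r = 0 := hr
  have := sub_eq_zero.mp this
  exact this
end

section
/- Let X be a finite set and let (G_r)_{r} be a family of functions G_r : X → ℝ indexed by observations r, of the form G_r(x) = G(x) + σ̃(x)·t(r) for some functions G, σ̃ : X → ℝ and t : R → ℝ with t taking at least two values of opposite sign of arbitrarily large magnitude. If arg max_x G_r(x) contains a common point x₀ for all r, then for any x₁, x₂ ∈ X with G(x₁) = G(x₂) = max_x G(x) we have σ̃(x₁) = σ̃(x₂) ≤ σ̃(x₀); more precisely, if the maximizer of G_r is independent of r then σ̃ must be maximized (among maximizers of G) at x₀ and the value max_x G_r(x) is affine in t(r). -/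
open Filter

/-- If the maximizer of the affine family `x ↦ G(x) + σ̃(x)·t(r)` is a common
point `x₀` for all `r`, and `t` takes values of both signs of arbitrarily
large magnitude, then `σ̃` is constant (and maximal at `x₀`) on the maximizers
of `G`, and the maximal value is affine in `t(r)`. -/
theorem stmt18 {X : Type*} [Fintype X] [Nonempty X] {R : Type*}
    (G σt : X → ℝ) (t : R → ℝ)
    (Gr : R → X → ℝ) (hGr : ∀ r x, Gr r x = G x + σt x * t r)
    (hbig : ∀ M : ℝ, 0 < M → (∃ r, M ≤ t r) ∧ (∃ r, t r ≤ -M))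
    (x₀ : X) (hmax : ∀ r x, Gr r x ≤ Gr r x₀) :
    (∀ x₁ x₂ : X, (G x₁ = ⨆ x, G x) → (G x₂ = ⨆ x, G x) →
      σt x₁ = σt x₂ ∧ σt x₁ ≤ σt x₀) ∧
    ∀ r, (⨆ x, Gr r x) = G x₀ + σt x₀ * t r := by
  -- key: σt is globally constant equal to σt x₀
  have key : ∀ x, σt x = σt x₀ := by
    intro x
    obtain ⟨d, c, hc, hdc⟩ : ∃ d c : ℝ, c = σt x₀ - σt x ∧ ∀ r, d ≤ c * t r := by
      refine ⟨G x - G x₀, σt x₀ - σt x, rfl, fun r => ?_⟩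
      have := hmax r x
      rw [hGr, hGr] at this
      nlinarith [this]
    have hc0 : c = 0 := by
      by_contra hne
      have habs : 0 < |c| := abs_pos.mpr hne
      have hM : 0 < (|d| + 1) / |c| := by positivity
      rcases hbig _ hM with ⟨⟨r₁, hr₁⟩, ⟨r₂, hr₂⟩⟩
      rcases lt_or_gt_of_ne hne with hlt | hgt
      · -- c < 0 : use large positive t
        have h1 := hdc r₁
        have : c * t r₁ ≤ c * ((|d| + 1) / |c|) :=
          mul_le_mul_of_nonpos_left hr₁ hlt.le
        have habs' : |c| = -c := abs_of_neg hlt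
        rw [habs'] at this
        have hcne : (-c) ≠ 0 := neg_ne_zero.mpr hne
        have : c * ((|d| + 1) / (-c)) = -(|d| + 1) := by
          field_simp
        nlinarith [abs_nonneg d, neg_abs_le d, h1,
          mul_le_mul_of_nonpos_left hr₁ hlt.le]
      · -- c > 0 : use large negative t
        have h1 := hdc r₂
        have h2 : c * t r₂ ≤ c * (-((|d| + 1) / |c|)) :=
          mul_le_mul_of_nonneg_left hr₂ hgt.le
        have habs' : |c| = c := abs_of_pos hgt
        rw [habs'] at h2
        have h3 : c * (-((|d| + 1) / c)) = -(|d| + 1) := by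
          field_simp
        nlinarith [neg_abs_le d]
    rw [hc] at hc0; linarith [hc0]
  have hGle : ∀ x, G x ≤ G x₀ := by
    intro x
    obtain ⟨⟨r, _⟩, _⟩ := hbig 1 one_pos
    have := hmax r x
    rw [hGr, hGr, key x] at this
    linarith
  constructor
  · intro x₁ x₂ _ _
    rw [key x₁, key x₂]
    exact ⟨rfl, le_refl _⟩
  · intro r
    have h1 : (⨆ x, Gr r x) = Gr r x₀ := by
      apply le_antisymm
      · exact ciSup_le (hmax r)
      · exact le_ciSup (Set.Finite.bddAbove (Set.finite_range _)) x₀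
    rw [h1, hGr]
end
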